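/- arXiv:1507.08163 — 3 statements merged into one kernel-verified Lean document; each statement's English description precedes it below -/
import Mathlib

section
/- For any skew-symmetric bilinear map μ : p × p → p on a finite-dimensional inner product space p, the transpose of δ_μ satisfies δ_μᵗ(μ) = -4 M_μ, and consequently tr(M_μ) = -(1/4)|μ|², where M_μ is defined by tr(M_μ E) = -(1/4)⟨δ_μ(E), μ⟩ and |μ|² = Σ_{i,j}|μ(e_i,e_j)|² over an orthonormal basis. -/
open scoped RealInnerProductSpace

section aux
variable {p : Type*} [NormedAddCommGroup p] [InnerProductSpace ℝ p]
    [FiniteDimensional ℝ p]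
    (b : OrthonormalBasis (Fin (Module.finrank ℝ p)) ℝ p)
    (μ : p →ₗ[ℝ] p →ₗ[ℝ] p)

lemma exp1 (F : p →ₗ[ℝ] p) (i j : Fin (Module.finrank ℝ p)) :
    ⟪μ (F (b i)) (b j), μ (b i) (b j)⟫ =
      ∑ k, ⟪F (b i), b k⟫ * ⟪μ (b k) (b j), μ (b i) (b j)⟫ := by
  conv_lhs => rw [← b.sum_repr' (F (b i))]
  rw [map_sum, LinearMap.sum_apply, sum_inner]
  refine Finset.sum_congr rfl fun k _ => ?_
  rw [map_smul, LinearMap.smul_apply, real_inner_smul_left, real_inner_comm (b k)]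

lemma term1_adj (E : p →ₗ[ℝ] p) :
    (∑ i, ∑ j, ⟪μ ((LinearMap.adjoint E) (b i)) (b j), μ (b i) (b j)⟫)
      = ∑ i, ∑ j, ⟪μ (E (b i)) (b j), μ (b i) (b j)⟫ := by
  simp only [exp1 b μ]
  have swapjk : ∀ F : p →ₗ[ℝ] p,
      (∑ i, ∑ j, ∑ k, ⟪F (b i), b k⟫ * ⟪μ (b k) (b j), μ (b i) (b j)⟫)
        = ∑ i, ∑ k, ∑ j, ⟪F (b i), b k⟫ * ⟪μ (b k) (b j), μ (b i) (b j)⟫ :=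
    fun F => Finset.sum_congr rfl fun i _ => Finset.sum_comm
  
  rw [swapjk, swapjk, Finset.sum_comm]
  refine Finset.sum_congr rfl fun i _ => Finset.sum_congr rfl fun k _ =>
    Finset.sum_congr rfl fun j _ => ?_
  rw [LinearMap.adjoint_inner_left, real_inner_comm (b k) (E (b i)),
    real_inner_comm (μ (b i) (b j)) (μ (b k) (b j))]

lemma term2_eq_term1 (hskew : ∀ x y : p, μ x y = -μ y x) (F : p →ₗ[ℝ] p) :
    (∑ i, ∑ j, ⟪μ (b i) (F (b j)), μ (b i) (b j)⟫)
      = ∑ i, ∑ j, ⟪μ (F (b i)) (b j), μ (b i) (b j)⟫ := by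
  rw [Finset.sum_comm]
  refine Finset.sum_congr rfl fun j _ => Finset.sum_congr rfl fun i _ => ?_
  rw [hskew (b i) (F (b j)), hskew (b i) (b j), inner_neg_neg]

lemma term3_adj (E : p →ₗ[ℝ] p) :
    (∑ i, ∑ j, ⟪(LinearMap.adjoint E) (μ (b i) (b j)), μ (b i) (b j)⟫)
      = ∑ i, ∑ j, ⟪E (μ (b i) (b j)), μ (b i) (b j)⟫ := by
  refine Finset.sum_congr rfl fun i _ => Finset.sum_congr rfl fun j _ => ?_
  rw [LinearMap.adjoint_inner_left, real_inner_comm]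

lemma S_adj (hskew : ∀ x y : p, μ x y = -μ y x) (E : p →ₗ[ℝ] p) :
    (∑ i, ∑ j, ⟪μ ((LinearMap.adjoint E) (b i)) (b j)
        + μ (b i) ((LinearMap.adjoint E) (b j))
        - (LinearMap.adjoint E) (μ (b i) (b j)), μ (b i) (b j)⟫)
      = ∑ i, ∑ j, ⟪μ (E (b i)) (b j) + μ (b i) (E (b j)) - E (μ (b i) (b j)),
          μ (b i) (b j)⟫ := by
  simp only [inner_sub_left, inner_add_left, Finset.sum_sub_distrib, Finset.sum_add_distrib]
  rw [term1_adj b μ E, term2_eq_term1 b μ hskew (LinearMap.adjoint E),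
    term2_eq_term1 b μ hskew E, term1_adj b μ E, term3_adj b μ E]

end aux

/-- `δ_μᵗ(μ) = -4 M_μ` (expressed through the adjoint characterization
`⟨μ, δ_μ(E)⟩ = ⟨-4M_μ, E⟩ = tr((-4M_μ) Eᵗ)` for all `E`), and `tr M_μ = -(1/4)|μ|²`. -/
theorem stmt8 (p : Type*) [NormedAddCommGroup p] [InnerProductSpace ℝ p]
    [FiniteDimensional ℝ p]
    (b : OrthonormalBasis (Fin (Module.finrank ℝ p)) ℝ p)
    (μ : p →ₗ[ℝ] p →ₗ[ℝ] p) (hskew : ∀ x y : p, μ x y = -μ y x)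
    (M : p →ₗ[ℝ] p)
    (hM : ∀ E : p →ₗ[ℝ] p, LinearMap.trace ℝ p (M ∘ₗ E) =
      -(1/4) * ∑ i, ∑ j,
        ⟪μ (E (b i)) (b j) + μ (b i) (E (b j)) - E (μ (b i) (b j)), μ (b i) (b j)⟫) :
    (∀ E : p →ₗ[ℝ] p,
      ∑ i, ∑ j,
        ⟪μ (E (b i)) (b j) + μ (b i) (E (b j)) - E (μ (b i) (b j)), μ (b i) (b j)⟫
        = LinearMap.trace ℝ p ((((-4 : ℝ) • M) ∘ₗ LinearMap.adjoint E)))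
    ∧ LinearMap.trace ℝ p M = -(1/4) * ∑ i, ∑ j, ⟪μ (b i) (b j), μ (b i) (b j)⟫ := by
  constructor
  · intro E
    have h := hM (LinearMap.adjoint E)
    rw [S_adj b μ hskew E] at h
    rw [LinearMap.smul_comp, map_smul, smul_eq_mul, h]
    ring
  · have h := hM (LinearMap.id)
    simp only [LinearMap.id_apply, LinearMap.comp_id] at h
    rw [h]
    congr 1
    refine Finset.sum_congr rfl fun i _ => Finset.sum_congr rfl fun j _ => ?_
    have : μ (b i) (b j) + μ (b i) (b j) - μ (b i) (b j) = μ (b i) (b j) := by abel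
    rw [this]
end

section
/- Let g = k ⊕ p be a vector space decomposition, μ : p × p → g bilinear skew-symmetric with k-component μ_k and p-component μ_p. If μ evolves by d/dt μ_k(t) = μ_k(t)(Q(t)·,·) + μ_k(t)(·,Q(t)·) for endomorphisms Q(t) of p, then d/dt |μ_k(t)|² = -4 tr( Q(t) Σ_{l=1}^q J_{μ_k(t)}(Z_l)² ), where {Z_l} is an orthonormal basis of k and J_{μ_k}(Z) ∈ End(p) is the skew-symmetric map defined by ⟨J_{μ_k}(Z)X, Y⟩ = ⟨μ_k(X,Y), Z⟩. -/
open scoped RealInnerProductSpace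

/-!
Differentiating gives `d/dt |μ_k|² = 2 Σ_{i,j} ⟪μ_k(Q e_i, e_j) + μ_k(e_i, Q e_j), μ_k(e_i, e_j)⟫`, and
skew-symmetry of `μ_k` makes the two terms equal. Expanding `μ_k(x, e_j)` in the basis `Z_l` and
using the defining identity of `J` turns `Σ_j ⟪μ_k(x, e_j), μ_k(y, e_j)⟫` into
`Σ_l ⟪J(Z_l) x, J(Z_l) y⟫`; since each `J(Z_l)` is skew-adjoint this is `-⟪Σ_l J(Z_l)² x, y⟫`,
and summing over `x = Q e_i`, `y = e_i` gives `-tr (Σ_l J(Z_l)² ∘ Q) = -tr (Q ∘ Σ_l J(Z_l)²)`.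
-/

open LinearMap (trace)

section

variable {p k ι κ : Type*} [NormedAddCommGroup p] [InnerProductSpace ℝ p]
  [NormedAddCommGroup k] [InnerProductSpace ℝ k] [Fintype ι] [Fintype κ]

theorem hasDerivAt_inner_self {f : ℝ → k} {f' : k} {t : ℝ} (hf : HasDerivAt f f' t) :
    HasDerivAt (fun s => ⟪f s, f s⟫) (2 * ⟪f', f t⟫) t :=
  (hf.inner ℝ hf).congr_deriv (by rw [real_inner_comm f' (f t)]; ring)

theorem sum_inner_apply_right_eq_sum_inner (μ : p →ₗ[ℝ] p →ₗ[ℝ] k) (J : k → p →ₗ[ℝ] p)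
    (hJ : ∀ Z x y, ⟪J Z x, y⟫ = ⟪μ x y, Z⟫) (bp : OrthonormalBasis ι ℝ p)
    (bk : OrthonormalBasis κ ℝ k) (x y : p) :
    ∑ j, ⟪μ x (bp j), μ y (bp j)⟫ = ∑ l, ⟪J (bk l) x, J (bk l) y⟫ :=
  calc ∑ j, ⟪μ x (bp j), μ y (bp j)⟫
      = ∑ j, ∑ l, ⟪J (bk l) x, bp j⟫ * ⟪bp j, J (bk l) y⟫ := by
        refine Finset.sum_congr rfl fun j _ => ?_
        rw [← bk.sum_inner_mul_inner]
        refine Finset.sum_congr rfl fun l _ => ?_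
        rw [hJ, real_inner_comm (J (bk l) y), hJ, real_inner_comm (bk l) (μ y (bp j))]
    _ = ∑ l, ⟪J (bk l) x, J (bk l) y⟫ := by
        rw [Finset.sum_comm]
        exact Finset.sum_congr rfl fun l _ => bp.sum_inner_mul_inner _ _

theorem inner_apply_left_eq_neg_inner_apply_right (μ : p →ₗ[ℝ] p →ₗ[ℝ] k)
    (hskew : ∀ x y, μ x y = -μ y x) (J : k → p →ₗ[ℝ] p) (hJ : ∀ Z x y, ⟪J Z x, y⟫ = ⟪μ x y, Z⟫)
    (Z : k) (x y : p) : ⟪J Z x, y⟫ = -⟪x, J Z y⟫ := by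
  rw [hJ, real_inner_comm (J Z y), hJ, hskew y x, inner_neg_left, neg_neg]

theorem sum_sum_inner_apply_comp_left_eq_neg_trace [FiniteDimensional ℝ p]
    (μ : p →ₗ[ℝ] p →ₗ[ℝ] k)
    (hskew : ∀ x y, μ x y = -μ y x) (J : k → p →ₗ[ℝ] p) (hJ : ∀ Z x y, ⟪J Z x, y⟫ = ⟪μ x y, Z⟫)
    (bp : OrthonormalBasis ι ℝ p) (bk : OrthonormalBasis κ ℝ k) (A : p →ₗ[ℝ] p) :
    ∑ i, ∑ j, ⟪μ (A (bp i)) (bp j), μ (bp i) (bp j)⟫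
      = -trace ℝ p (A ∘ₗ ∑ l, J (bk l) ∘ₗ J (bk l)) := by
  have hJskew := inner_apply_left_eq_neg_inner_apply_right μ hskew J hJ
  calc ∑ i, ∑ j, ⟪μ (A (bp i)) (bp j), μ (bp i) (bp j)⟫
      = ∑ i, ∑ l, ⟪J (bk l) (A (bp i)), J (bk l) (bp i)⟫ := by
        simp only [sum_inner_apply_right_eq_sum_inner μ J hJ bp bk]
    _ = -∑ i, ⟪bp i, ((∑ l, J (bk l) ∘ₗ J (bk l)) ∘ₗ A) (bp i)⟫ := by
        simp only [LinearMap.comp_apply, LinearMap.sum_apply, inner_sum, ← Finset.sum_neg_distrib]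
        refine Finset.sum_congr rfl fun i _ => Finset.sum_congr rfl fun l _ => ?_
        rw [real_inner_comm (J (bk l) (bp i)), hJskew]
    _ = -trace ℝ p (A ∘ₗ ∑ l, J (bk l) ∘ₗ J (bk l)) := by
        rw [LinearMap.trace_comp_comm', LinearMap.trace_eq_sum_inner _ bp]

theorem sum_sum_inner_apply_comp_right_eq_left (μ : p →ₗ[ℝ] p →ₗ[ℝ] k)
    (hskew : ∀ x y, μ x y = -μ y x) (u : ι → p) (A : p →ₗ[ℝ] p) :
    ∑ i, ∑ j, ⟪μ (u i) (A (u j)), μ (u i) (u j)⟫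
      = ∑ i, ∑ j, ⟪μ (A (u i)) (u j), μ (u i) (u j)⟫ := by
  rw [Finset.sum_comm]
  refine Finset.sum_congr rfl fun i _ => Finset.sum_congr rfl fun j _ => ?_
  rw [hskew (u j), hskew (u j), inner_neg_neg]

end

theorem stmt11_general (p k : Type*) [NormedAddCommGroup p] [InnerProductSpace ℝ p]
    [FiniteDimensional ℝ p] [NormedAddCommGroup k] [InnerProductSpace ℝ k]
    (bp : OrthonormalBasis (Fin (Module.finrank ℝ p)) ℝ p)
    (bk : OrthonormalBasis (Fin (Module.finrank ℝ k)) ℝ k)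
    (μk : ℝ → p →ₗ[ℝ] p →ₗ[ℝ] k) (hskew : ∀ (t : ℝ) (x y : p), μk t x y = -μk t y x)
    (Q : ℝ → p →ₗ[ℝ] p)
    (hflow : ∀ (t : ℝ) (x y : p), HasDerivAt (fun s => μk s x y)
      (μk t (Q t x) y + μk t x (Q t y)) t)
    (J : ℝ → k → (p →ₗ[ℝ] p))
    (hJ : ∀ (t : ℝ) (Z : k) (x y : p), ⟪J t Z x, y⟫ = ⟪μk t x y, Z⟫) :
    ∀ t : ℝ, HasDerivAt (fun s => ∑ i, ∑ j, ⟪μk s (bp i) (bp j), μk s (bp i) (bp j)⟫)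
      (-4 * LinearMap.trace ℝ p (Q t ∘ₗ ∑ l, J t (bk l) ∘ₗ J t (bk l))) t := by
  intro t
  refine (HasDerivAt.fun_sum (u := Finset.univ) fun i _ => HasDerivAt.fun_sum (u := Finset.univ)
    fun j _ => hasDerivAt_inner_self (hflow t (bp i) (bp j))).congr_deriv ?_
  simp only [inner_add_left, mul_add, Finset.sum_add_distrib, ← Finset.mul_sum]
  rw [sum_sum_inner_apply_comp_right_eq_left (μk t) (hskew t),
    sum_sum_inner_apply_comp_left_eq_neg_trace (μk t) (hskew t) (J t) (hJ t) bp bk]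
  ring

/-- if `μ_k(t)` evolves by `d/dt μ_k = μ_k(Q·,·) + μ_k(·,Q·)`, then
`d/dt |μ_k(t)|² = -4 tr(Q(t) Σ_l J_{μ_k(t)}(Z_l)²)`. -/
theorem stmt11 (p k : Type*) [NormedAddCommGroup p] [InnerProductSpace ℝ p]
    [FiniteDimensional ℝ p] [NormedAddCommGroup k] [InnerProductSpace ℝ k]
    [FiniteDimensional ℝ k]
    (bp : OrthonormalBasis (Fin (Module.finrank ℝ p)) ℝ p)
    (bk : OrthonormalBasis (Fin (Module.finrank ℝ k)) ℝ k)
    (μk : ℝ → p →ₗ[ℝ] p →ₗ[ℝ] k) (hskew : ∀ (t : ℝ) (x y : p), μk t x y = -μk t y x)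
    (Q : ℝ → p →ₗ[ℝ] p) (hQcont : ∀ x : p, Continuous fun t => Q t x)
    (hflow : ∀ (t : ℝ) (x y : p), HasDerivAt (fun s => μk s x y)
      (μk t (Q t x) y + μk t x (Q t y)) t)
    (J : ℝ → k → (p →ₗ[ℝ] p))
    (hJ : ∀ (t : ℝ) (Z : k) (x y : p), ⟪J t Z x, y⟫ = ⟪μk t x y, Z⟫) :
    ∀ t : ℝ, HasDerivAt (fun s => ∑ i, ∑ j, ⟪μk s (bp i) (bp j), μk s (bp i) (bp j)⟫)
      (-4 * LinearMap.trace ℝ p (Q t ∘ₗ ∑ l, J t (bk l) ∘ₗ J t (bk l))) t :=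
  stmt11_general p k bp bk μk hskew Q hflow J hJ
end

section
/- Let n = n(x,y) be the 7-dimensional Lie algebra with basis e₁,…,e₇ and only nonzero brackets μ(e₁,e₂) = -x e₅, μ(e₁,e₃) = -y e₆ (x, y ∈ R). Then the Jacobi identity holds for all x, y (n is a 2-step nilpotent Lie algebra), and the 3-form φ = e^{147} + e^{267} + e^{357} + e^{123} + e^{156} + e^{245} - e^{346} satisfies d_μ φ = (y - x) e^{1237}; in particular φ is closed if and only if x = y. -/
noncomputable section

/-- The Lie bracket of the 7-dimensional nilpotent Lie algebra `n(x,y)`: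
`[e₁,e₂] = -x e₅`, `[e₁,e₃] = -y e₆` (0-based: `[e₀,e₁] = -x e₄`, `[e₀,e₂] = -y e₅`). -/
def br (x y : ℝ) (u v : Fin 7 → ℝ) : Fin 7 → ℝ := fun i =>
  if i = 4 then -x * (u 0 * v 1 - u 1 * v 0)
  else if i = 5 then -y * (u 0 * v 2 - u 2 * v 0)
  else 0

/-- The basic 3-form `e^i ∧ e^j ∧ e^k` evaluated on vectors (0-based indices). -/
def w3 (i j k : Fin 7) (u v w : Fin 7 → ℝ) : ℝ :=
  Matrix.det !![u i, u j, u k; v i, v j, v k; w i, w j, w k]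

/-- The basic 4-form `e^i ∧ e^j ∧ e^k ∧ e^l` evaluated on vectors (0-based indices). -/
def w4 (i j k l : Fin 7) (u v w z : Fin 7 → ℝ) : ℝ :=
  Matrix.det !![u i, u j, u k, u l; v i, v j, v k, v l;
                w i, w j, w k, w l; z i, z j, z k, z l]

/-- The `G₂`-structure `φ = e^{147}+e^{267}+e^{357}+e^{123}+e^{156}+e^{245}-e^{346}`
(written 0-based). -/
def phi (u v w : Fin 7 → ℝ) : ℝ :=
  w3 0 3 6 u v w + w3 1 5 6 u v w + w3 2 4 6 u v w + w3 0 1 2 u v w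
    + w3 0 4 5 u v w + w3 1 3 4 u v w - w3 2 3 5 u v w

/-- The Chevalley–Eilenberg differential of the 3-form `φ` on `n(x,y)`:
`dφ(X₀,X₁,X₂,X₃) = Σ_{i<j} (-1)^{i+j} φ([X_i,X_j], …)`. -/
def dphi (x y : ℝ) (u v w z : Fin 7 → ℝ) : ℝ :=
  -phi (br x y u v) w z + phi (br x y u w) v z - phi (br x y u z) v w
    - phi (br x y v w) u z + phi (br x y v z) u w - phi (br x y w z) u v

private lemma br0 (x y : ℝ) (u v : Fin 7 → ℝ) : br x y u v 0 = 0 := by simp [br]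
private lemma br1 (x y : ℝ) (u v : Fin 7 → ℝ) : br x y u v 1 = 0 := by simp [br]
private lemma br2 (x y : ℝ) (u v : Fin 7 → ℝ) : br x y u v 2 = 0 := by simp [br]
private lemma br3 (x y : ℝ) (u v : Fin 7 → ℝ) : br x y u v 3 = 0 := by simp [br]
private lemma br4 (x y : ℝ) (u v : Fin 7 → ℝ) :
    br x y u v 4 = -x * (u 0 * v 1 - u 1 * v 0) := by simp [br]
private lemma br5 (x y : ℝ) (u v : Fin 7 → ℝ) :
    br x y u v 5 = -y * (u 0 * v 2 - u 2 * v 0) := by simp [br]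
private lemma br6 (x y : ℝ) (u v : Fin 7 → ℝ) : br x y u v 6 = 0 := by simp [br]

private lemma w3_eq (i j k : Fin 7) (u v w : Fin 7 → ℝ) :
    w3 i j k u v w =
      u i * (v j * w k - w j * v k) - u j * (v i * w k - w i * v k)
        + u k * (v i * w j - w i * v j) := by
  simp [w3, Matrix.det_fin_three]; ring

set_option maxHeartbeats 800000 in
private lemma w4_eq (i j k l : Fin 7) (u v w z : Fin 7 → ℝ) :
    w4 i j k l u v w z =
      u i * w3 j k l v w z - u j * w3 i k l v w z
        + u k * w3 i j l v w z - u l * w3 i j k v w z := by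
  simp only [w4, w3]
  rw [Matrix.det_succ_row_zero]
  simp [Fin.sum_univ_succ, Fin.succAbove, Matrix.det_fin_three,
    show Fin.succ (2:Fin 3) = (3:Fin 4) from rfl, show Fin.castSucc (2:Fin 3) = (2:Fin 4) from rfl,
    show Fin.succ (1:Fin 3) = (2:Fin 4) from rfl, show Fin.castSucc (1:Fin 3) = (1:Fin 4) from rfl,
    show Fin.succ (0:Fin 3) = (1:Fin 4) from rfl, show Fin.castSucc (0:Fin 3) = (0:Fin 4) from rfl]
  ring

set_option maxHeartbeats 1600000 in
/-- `n(x,y)` satisfies the Jacobi identity for all `x, y`, and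
`dφ = (y-x) e^{1237}`; in particular `φ` is closed iff `x = y`. -/
theorem stmt16 (x y : ℝ) :
    (∀ u v w : Fin 7 → ℝ,
      br x y (br x y u v) w + br x y (br x y v w) u + br x y (br x y w u) v = 0)
    ∧ (∀ u v w z : Fin 7 → ℝ, dphi x y u v w z = (y - x) * w4 0 1 2 6 u v w z)
    ∧ ((∀ u v w z : Fin 7 → ℝ, dphi x y u v w z = 0) ↔ x = y) := by

  have key : ∀ u v w z : Fin 7 → ℝ, dphi x y u v w z = (y - x) * w4 0 1 2 6 u v w z := by
    intro u v w z
    simp only [dphi, phi, w3_eq, w4_eq, br0, br1, br2, br3, br4, br5, br6]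
    ring
  refine ⟨?_, key, ?_, ?_⟩
  · intro u v w
    funext i
    fin_cases i <;> simp [br]
  · intro h
    have h1 := h (fun i => if i = 0 then 1 else 0) (fun i => if i = 1 then 1 else 0)
      (fun i => if i = 2 then 1 else 0) (fun i => if i = 6 then 1 else 0)
    rw [key] at h1
    have h2 : w4 0 1 2 6 (fun i => if i = 0 then 1 else 0) (fun i => if i = 1 then 1 else 0)
      (fun i => if i = 2 then 1 else 0) (fun i => if i = 6 then 1 else 0) = 1 := by
      rw [w4_eq]; simp [w3_eq]
    rw [h2, mul_one, sub_eq_zero] at h1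
    linarith
  · intro h u v w z
    rw [key, h]
    ring


end
end
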